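/- (Decoupling of translation) Suppose xₙ = R_b R_U x'ₙ for all n ∈ [N], with b ∈ ℝ^d and U ∈ O(d). Then there exists V ∈ O(d) such that R_{-m_x} xₙ = R_V R_{-m_{x'}} x'ₙ for all n, where m_x and m_{x'} are the hyperbolic centroids of the two point sets. -/
import Mathlib


open Matrix BigOperators

noncomputable section

/-- The Lorentzian signature matrix H = diag(-1, 1, ..., 1). -/
def Hm (d : ℕ) : Matrix (Fin (d+1)) (Fin (d+1)) ℝ :=
  Matrix.diagonal (fun i => if i = 0 then -1 else 1)

/-- The Lorentzian inner product [x, y] = xᵀ H y. -/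
def lprod {d : ℕ} (x y : Fin (d+1) → ℝ) : ℝ := x ⬝ᵥ (Hm d).mulVec y

/-- The 'Loid model of hyperbolic space. -/
def Loid (d : ℕ) : Set (Fin (d+1) → ℝ) := {x | lprod x x = -1 ∧ 0 < x 0}

/-- The projection dropping the first coordinate. -/
def Pproj {d : ℕ} (x : Fin (d+1) → ℝ) : Fin d → ℝ := fun i => x i.succ

/-- The lift z ↦ (√(1+‖z‖²), z). -/
def Qlift {d : ℕ} (z : Fin d → ℝ) : Fin (d+1) → ℝ :=
  Fin.cons (Real.sqrt (1 + ∑ i, z i ^ 2)) z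

/-- The positive semidefinite square root of I + b bᵀ (explicit formula;
for b = 0 the coefficient is 0 by division-by-zero convention, giving I). -/
def sqrtIbb {d : ℕ} (b : Fin d → ℝ) : Matrix (Fin d) (Fin d) ℝ :=
  1 + ((Real.sqrt (1 + ∑ i, b i ^ 2) - 1) / (∑ i, b i ^ 2)) • Matrix.vecMulVec b b

/-- The hyperbolic rotation matrix R_U = [[1, 0ᵀ], [0, U]]. -/
def RU {d : ℕ} (U : Matrix (Fin d) (Fin d) ℝ) : Matrix (Fin (d+1)) (Fin (d+1)) ℝ :=
  Matrix.of (Fin.cons (Fin.cons 1 0) (fun i => Fin.cons 0 (U i)))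

/-- The hyperbolic translation matrix R_b = [[√(1+‖b‖²), bᵀ], [b, (I + b bᵀ)^{1/2}]]. -/
def Rb {d : ℕ} (b : Fin d → ℝ) : Matrix (Fin (d+1)) (Fin (d+1)) ℝ :=
  Matrix.of (Fin.cons (Fin.cons (Real.sqrt (1 + ∑ i, b i ^ 2)) b)
    (fun i => Fin.cons (b i) (sqrtIbb b i)))

/-- The hyperbolic centroid parameter m_x = (1/√(-[x̄,x̄])) · (1/N) Σₙ 𝒫(xₙ). -/
def centroid {d N : ℕ} (x : Fin N → (Fin (d+1) → ℝ)) : Fin d → ℝ :=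
  (1 / Real.sqrt (-(lprod ((N:ℝ)⁻¹ • ∑ n, x n) ((N:ℝ)⁻¹ • ∑ n, x n)))) •
    ((N:ℝ)⁻¹ • ∑ n, Pproj (x n))

lemma lprod_eq {d : ℕ} (x y : Fin (d+1) → ℝ) :
    lprod x y = -(x 0 * y 0) + ∑ i : Fin d, x i.succ * y i.succ := by
  simp only [lprod, Hm, dotProduct, Matrix.mulVec_diagonal, Fin.sum_univ_succ]
  simp [Fin.succ_ne_zero]


-- entry lemmas
@[simp] lemma RU_00 {d} (U : Matrix (Fin d) (Fin d) ℝ) : RU U 0 0 = 1 := rfl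
@[simp] lemma RU_0s {d} (U : Matrix (Fin d) (Fin d) ℝ) (j : Fin d) : RU U 0 j.succ = 0 := rfl
@[simp] lemma RU_s0 {d} (U : Matrix (Fin d) (Fin d) ℝ) (i : Fin d) : RU U i.succ 0 = 0 := by
  simp [RU]
@[simp] lemma RU_ss {d} (U : Matrix (Fin d) (Fin d) ℝ) (i j : Fin d) :
    RU U i.succ j.succ = U i j := by simp [RU]
@[simp] lemma Rb_00 {d} (b : Fin d → ℝ) : Rb b 0 0 = Real.sqrt (1 + ∑ i, b i ^ 2) := rfl
@[simp] lemma Rb_0s {d} (b : Fin d → ℝ) (j : Fin d) : Rb b 0 j.succ = b j := by simp [Rb]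
@[simp] lemma Rb_s0 {d} (b : Fin d → ℝ) (i : Fin d) : Rb b i.succ 0 = b i := by simp [Rb]
@[simp] lemma Rb_ss {d} (b : Fin d → ℝ) (i j : Fin d) : Rb b i.succ j.succ = sqrtIbb b i j := by
  simp [Rb]
lemma sqrtIbb_apply {d} (b : Fin d → ℝ) (i j : Fin d) :
    sqrtIbb b i j = (if i = j then 1 else 0)
      + ((Real.sqrt (1 + ∑ i, b i ^ 2) - 1) / (∑ i, b i ^ 2)) * (b i * b j) := by
  simp [sqrtIbb, Matrix.vecMulVec_apply, Matrix.one_apply]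

section core
variable {d : ℕ} (b : Fin d → ℝ)

local notation "σ" => ∑ i, b i ^ 2
local notation "β" => Real.sqrt (1 + ∑ i, b i ^ 2)
local notation "γ" => (Real.sqrt (1 + ∑ i, b i ^ 2) - 1) / (∑ i, b i ^ 2)

lemma sigma_nonneg : (0:ℝ) ≤ σ := Finset.sum_nonneg fun i _ => sq_nonneg _
lemma beta_sq : β ^ 2 = 1 + σ := Real.sq_sqrt (by positivity)
lemma beta_pos : (0:ℝ) < β := Real.sqrt_pos.2 (by positivity)

lemma b_eq_zero_of_sigma (h : σ = (0:ℝ)) : ∀ i, b i = 0 := by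
  intro i
  have := (Finset.sum_eq_zero_iff_of_nonneg (fun i _ => sq_nonneg (b i))).1 h i (Finset.mem_univ i)
  exact pow_eq_zero_iff (n := 2) (by norm_num) |>.1 this

lemma gamma_mul_sigma (h : σ ≠ (0:ℝ)) : γ * σ = β - 1 := by
  field_simp

-- key sum 1 : B b = β b
lemma sum_b_sqrtIbb (j : Fin d) : (∑ i, b i * sqrtIbb b i j) = β * b j := by
  by_cases h : σ = (0:ℝ)
  · simp [b_eq_zero_of_sigma b h]
  · have hb := gamma_mul_sigma b h
    simp only [sqrtIbb_apply, mul_add]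
    rw [Finset.sum_add_distrib]
    have h1 : (∑ i, b i * if i = j then (1:ℝ) else 0) = b j := by
      simp [Finset.sum_ite_eq' Finset.univ j (fun i => b i)]
    have h2 : (∑ i, b i * (γ * (b i * b j))) = γ * σ * b j := by
      trans (∑ i, γ * b j * b i ^ 2)
      · exact Finset.sum_congr rfl (fun i _ => by ring)
      · rw [← Finset.mul_sum]; ring
    rw [h1, h2, hb]; ring

lemma sqrtIbb_symm (i j : Fin d) : sqrtIbb b i j = sqrtIbb b j i := by
  simp [sqrtIbb_apply, eq_comm]; rw [eq_comm]; ring_nf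
  by_cases h : i = j <;> simp [h]

lemma sum_sqrtIbb_b (i : Fin d) : (∑ k, sqrtIbb b i k * b k) = β * b i := by
  have := sum_b_sqrtIbb b i
  rw [← this]; congr 1; ext k; rw [sqrtIbb_symm]; ring

-- key sum 2 : B² = 1 + b bᵀ
lemma sum_sqrtIbb_sqrtIbb (i j : Fin d) :
    (∑ k, sqrtIbb b i k * sqrtIbb b k j) = (if i = j then 1 else 0) + b i * b j := by
  by_cases h : σ = (0:ℝ)
  · by_cases hij : i = j <;> simp [b_eq_zero_of_sigma b h, sqrtIbb_apply, hij]
  · have hb := gamma_mul_sigma b h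
    have hβ := beta_sq b
    have expand : ∀ k, sqrtIbb b i k * sqrtIbb b k j =
        (if i = k then 1 else 0) * (if k = j then 1 else 0)
        + (if i = k then 1 else 0) * (γ * (b k * b j))
        + (γ * (b i * b k)) * (if k = j then 1 else 0)
        + γ * γ * (b i * b j) * b k ^ 2 := by
      intro k; simp only [sqrtIbb_apply]; ring
    rw [Finset.sum_congr rfl (fun k _ => expand k)]
    simp only [Finset.sum_add_distrib]
    have e1 : (∑ k, (if i = k then (1:ℝ) else 0) * (if k = j then 1 else 0))
        = if i = j then 1 else 0 := by
      by_cases hij : i = j <;> simp [hij, Finset.sum_ite_eq]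
    have e2 : (∑ k, (if i = k then (1:ℝ) else 0) * (γ * (b k * b j))) = γ * (b i * b j) := by
      simp [Finset.sum_ite_eq]
    have e3 : (∑ k, (γ * (b i * b k)) * (if k = j then (1:ℝ) else 0)) = γ * (b i * b j) := by
      simp [Finset.sum_ite_eq']
    have e4 : (∑ k, γ * γ * (b i * b j) * b k ^ 2) = γ * γ * (b i * b j) * σ := by
      rw [← Finset.mul_sum]
    rw [e1, e2, e3, e4]
    have h2γσ : (2 * γ + γ * γ * σ) * σ = 1 * σ := by
      linear_combination (γ * σ + β + 1) * hb + hβ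
    have h2γ : 2 * γ + γ * γ * σ = 1 := mul_right_cancel₀ h h2γσ
    have key : γ * (b i * b j) + γ * (b i * b j) + γ * γ * (b i * b j) * σ = b i * b j := by
      calc γ * (b i * b j) + γ * (b i * b j) + γ * γ * (b i * b j) * σ
          = (2 * γ + γ * γ * σ) * (b i * b j) := by ring
        _ = b i * b j := by rw [h2γ]; ring
    linarith [key]
end core

section mats
variable {d : ℕ}

def IsLorentz (A : Matrix (Fin (d+1)) (Fin (d+1)) ℝ) : Prop := Aᵀ * Hm d * A = Hm d

lemma mul_Hm_mul_apply (M M' : Matrix (Fin (d+1)) (Fin (d+1)) ℝ) (i j : Fin (d+1)) :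
    (M * Hm d * M') i j = -(M i 0 * M' 0 j) + ∑ k : Fin d, M i k.succ * M' k.succ j := by
  rw [Matrix.mul_assoc, Matrix.mul_apply, Fin.sum_univ_succ]
  have h0 : (Hm d * M') 0 j = -(M' 0 j) := by simp [Hm, Matrix.diagonal_mul]
  have hs : ∀ k : Fin d, (Hm d * M') k.succ j = M' k.succ j := fun k => by
    simp [Hm, Matrix.diagonal_mul, Fin.succ_ne_zero]
  rw [h0]
  simp only [hs]
  ring

lemma IsLorentz.mul {A B : Matrix (Fin (d+1)) (Fin (d+1)) ℝ}
    (hA : IsLorentz A) (hB : IsLorentz B) : IsLorentz (A * B) := by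
  unfold IsLorentz at *
  rw [Matrix.transpose_mul]
  calc Bᵀ * Aᵀ * Hm d * (A * B) = Bᵀ * (Aᵀ * Hm d * A) * B := by
        simp only [Matrix.mul_assoc]
    _ = Hm d := by rw [hA, hB]

lemma lprod_mulVec {A : Matrix (Fin (d+1)) (Fin (d+1)) ℝ} (hA : IsLorentz A)
    (x y : Fin (d+1) → ℝ) : lprod (A.mulVec x) (A.mulVec y) = lprod x y := by
  simp only [lprod, Matrix.mulVec_mulVec]
  calc dotProduct (A.mulVec x) ((Hm d * A).mulVec y)
      = dotProduct (Matrix.vecMul (A.mulVec x) (Hm d * A)) y :=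
        Matrix.dotProduct_mulVec _ _ _
    _ = dotProduct (Matrix.vecMul x (Aᵀ * (Hm d * A))) y := by
        rw [← Matrix.vecMul_transpose, Matrix.vecMul_vecMul]
    _ = dotProduct (Matrix.vecMul x (Hm d)) y := by rw [← Matrix.mul_assoc, hA]
    _ = dotProduct x ((Hm d).mulVec y) := (Matrix.dotProduct_mulVec _ _ _).symm

lemma Rb_transpose (b : Fin d → ℝ) : (Rb b)ᵀ = Rb b := by
  ext i j
  refine Fin.cases ?_ (fun i => ?_) i <;> refine Fin.cases ?_ (fun j => ?_) j <;>
    simp [Matrix.transpose_apply, sqrtIbb_symm]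

lemma Rb_lorentz (b : Fin d → ℝ) : IsLorentz (Rb b) := by
  unfold IsLorentz
  rw [Rb_transpose]
  ext i j
  rw [mul_Hm_mul_apply]
  refine Fin.cases ?_ (fun i => ?_) i <;> refine Fin.cases ?_ (fun j => ?_) j
  · simp only [Rb_00, Rb_0s, Rb_s0]
    have h1 : (∑ k : Fin d, b k * b k) = ∑ k, b k ^ 2 := by
      refine Finset.sum_congr rfl (fun k _ => ?_); ring
    have h2 : Real.sqrt (1 + ∑ i, b i ^ 2) * Real.sqrt (1 + ∑ i, b i ^ 2)
        = 1 + ∑ i, b i ^ 2 := Real.mul_self_sqrt (by positivity)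
    rw [h1, h2]
    simp [Hm, Matrix.diagonal_apply]
  · simp only [Rb_00, Rb_0s, Rb_s0, Rb_ss, sum_b_sqrtIbb]
    simp [Hm, Matrix.diagonal_apply, (Fin.succ_ne_zero j).symm]
  · simp only [Rb_00, Rb_0s, Rb_s0, Rb_ss, sum_sqrtIbb_b]
    simp [Hm, Matrix.diagonal_apply, Fin.succ_ne_zero]
    ring
  · simp only [Rb_s0, Rb_ss, sum_sqrtIbb_sqrtIbb]
    simp [Hm, Matrix.diagonal_apply, Fin.succ_ne_zero, Fin.succ_inj]

lemma RU_lorentz {U : Matrix (Fin d) (Fin d) ℝ} (hU : Uᵀ * U = 1) : IsLorentz (RU U) := by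
  have hUij : ∀ i j, (∑ k, U k i * U k j) = if i = j then (1:ℝ) else 0 := by
    intro i j
    have := congrFun (congrFun hU i) j
    simpa [Matrix.mul_apply, Matrix.transpose_apply, Matrix.one_apply] using this
  unfold IsLorentz
  ext i j
  rw [mul_Hm_mul_apply]
  refine Fin.cases ?_ (fun i => ?_) i <;> refine Fin.cases ?_ (fun j => ?_) j <;>
    simp [Hm, Matrix.diagonal_apply, Fin.succ_ne_zero, (fun j => (Fin.succ_ne_zero j).symm :
      ∀ j : Fin d, (0 : Fin (d+1)) ≠ j.succ), Fin.succ_inj, Matrix.transpose_apply, hUij]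

end mats

section inv
variable {d : ℕ} (b : Fin d → ℝ)

lemma Hm_mul_Hm (d : ℕ) : Hm d * Hm d = 1 := by
  ext i j
  rcases eq_or_ne i j with h | h <;>
    by_cases h0 : i = 0 <;>
      simp_all [Hm, Matrix.diagonal_mul_diagonal, Matrix.diagonal_apply, Matrix.one_apply,
        eq_comm]

lemma sum_neg_sq : (∑ i, (-b) i ^ 2) = ∑ i, b i ^ 2 := by simp

lemma sqrtIbb_neg : sqrtIbb (-b) = sqrtIbb b := by
  unfold sqrtIbb
  rw [sum_neg_sq]
  congr 1
  ext i j
  simp [Matrix.vecMulVec_apply]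

lemma Rb_neg_eq : Rb (-b) = Hm d * Rb b * Hm d := by
  ext i j
  have hmul : (Hm d * Rb b * Hm d) i j
      = (if i = 0 then (-1:ℝ) else 1) * Rb b i j * (if j = 0 then (-1:ℝ) else 1) := by
    rw [Matrix.mul_assoc]
    simp [Hm, Matrix.diagonal_mul, Matrix.mul_diagonal]
  rw [hmul]
  refine Fin.cases ?_ (fun i => ?_) i <;> refine Fin.cases ?_ (fun j => ?_) j <;>
    simp [sum_neg_sq, sqrtIbb_neg, Fin.succ_ne_zero]

lemma Rb_mul_Rb_neg : Rb b * Rb (-b) = 1 := by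
  have hL := Rb_lorentz b
  unfold IsLorentz at hL
  rw [Rb_transpose] at hL
  rw [Rb_neg_eq]
  calc Rb b * (Hm d * Rb b * Hm d) = (Rb b * Hm d * Rb b) * Hm d := by
        simp only [Matrix.mul_assoc]
    _ = Hm d * Hm d := by rw [hL]
    _ = 1 := Hm_mul_Hm d

end inv

section mv
variable {d : ℕ}

lemma mulVec_succ (M : Matrix (Fin (d+1)) (Fin (d+1)) ℝ) (v : Fin (d+1) → ℝ) (i : Fin (d+1)) :
    M.mulVec v i = M i 0 * v 0 + ∑ k : Fin d, M i k.succ * v k.succ := by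
  simp [Matrix.mulVec, dotProduct, Fin.sum_univ_succ]

lemma Rb_mulVec_zero (b : Fin d → ℝ) (v : Fin (d+1) → ℝ) :
    (Rb b).mulVec v 0 = Real.sqrt (1 + ∑ i, b i ^ 2) * v 0 + ∑ k : Fin d, b k * v k.succ := by
  rw [mulVec_succ]; simp

lemma Rb_mulVec_succ (b : Fin d → ℝ) (v : Fin (d+1) → ℝ) (i : Fin d) :
    (Rb b).mulVec v i.succ = b i * v 0 + ∑ k : Fin d, sqrtIbb b i k * v k.succ := by
  rw [mulVec_succ]; simp

lemma RU_mulVec_zero (U : Matrix (Fin d) (Fin d) ℝ) (v : Fin (d+1) → ℝ) :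
    (RU U).mulVec v 0 = v 0 := by
  rw [mulVec_succ]; simp

end mv

section bilin
variable {d : ℕ}

lemma lprod_smul_left (c : ℝ) (x y : Fin (d+1) → ℝ) : lprod (c • x) y = c * lprod x y := by
  simp only [lprod_eq, Pi.smul_apply, smul_eq_mul, Finset.mul_sum, mul_add]
  congr 1
  · ring
  · exact Finset.sum_congr rfl fun i _ => by ring

lemma lprod_smul_right (c : ℝ) (x y : Fin (d+1) → ℝ) : lprod x (c • y) = c * lprod x y := by
  simp only [lprod_eq, Pi.smul_apply, smul_eq_mul, Finset.mul_sum, mul_add]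
  congr 1
  · ring
  · exact Finset.sum_congr rfl fun i _ => by ring

lemma lprod_sum_right {N : ℕ} (x : Fin (d+1) → ℝ) (u : Fin N → Fin (d+1) → ℝ) :
    lprod x (∑ n, u n) = ∑ n, lprod x (u n) := by
  simp only [lprod_eq, Finset.sum_apply, Finset.mul_sum]
  rw [Finset.sum_comm, ← Finset.sum_neg_distrib, ← Finset.sum_add_distrib]

lemma lprod_sum_left {N : ℕ} (u : Fin N → Fin (d+1) → ℝ) (y : Fin (d+1) → ℝ) :
    lprod (∑ n, u n) y = ∑ n, lprod (u n) y := by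
  simp only [lprod_eq, Finset.sum_apply, Finset.sum_mul]
  rw [Finset.sum_comm, ← Finset.sum_neg_distrib, ← Finset.sum_add_distrib]

-- reverse Cauchy-Schwarz
lemma lprod_le_neg_one {u v : Fin (d+1) → ℝ} (hu : u ∈ Loid d) (hv : v ∈ Loid d) :
    lprod u v ≤ -1 := by
  obtain ⟨hu1, hu0⟩ := hu
  obtain ⟨hv1, hv0⟩ := hv
  rw [lprod_eq] at hu1 hv1 ⊢
  set p := ∑ i : Fin d, u i.succ ^ 2 with hp
  set q := ∑ i : Fin d, v i.succ ^ 2 with hq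
  set S := ∑ i : Fin d, u i.succ * v i.succ with hS
  have hpn : 0 ≤ p := Finset.sum_nonneg fun i _ => sq_nonneg _
  have hqn : 0 ≤ q := Finset.sum_nonneg fun i _ => sq_nonneg _
  have hcs : S ^ 2 ≤ p * q := Finset.sum_mul_sq_le_sq_mul_sq _ _ _
  have hu2 : u 0 ^ 2 = 1 + p := by
    have h : (∑ i : Fin d, u i.succ * u i.succ) = p := by
      rw [hp]; exact Finset.sum_congr rfl fun i _ => (sq (u i.succ)).symm
    nlinarith [hu1, h]
  have hv2 : v 0 ^ 2 = 1 + q := by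
    have h : (∑ i : Fin d, v i.succ * v i.succ) = q := by
      rw [hq]; exact Finset.sum_congr rfl fun i _ => (sq (v i.succ)).symm
    nlinarith [hv1, h]
  have h2S : 2 * S ≤ p + q := by nlinarith [hcs, sq_nonneg (p - q), hpn, hqn]
  have huv2 : (u 0 * v 0) ^ 2 = (1 + p) * (1 + q) := by rw [mul_pow, hu2, hv2]
  have hprod : (1 + S) ^ 2 ≤ (u 0 * v 0) ^ 2 := by rw [huv2]; nlinarith [hcs, h2S]
  have huv : 0 < u 0 * v 0 := mul_pos hu0 hv0
  by_cases h1S : 1 + S ≤ 0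
  · nlinarith
  · nlinarith [hprod, huv]

end bilin

section pres
variable {d : ℕ}

lemma Qlift_zero {z : Fin d → ℝ} : Qlift z 0 = Real.sqrt (1 + ∑ i, z i ^ 2) := rfl
lemma Qlift_succ {z : Fin d → ℝ} (i : Fin d) : Qlift z i.succ = z i := by simp [Qlift]

lemma Rb_mulVec_e0 (b : Fin d → ℝ) : (Rb b).mulVec (Fin.cons 1 0) = Qlift b := by
  ext i
  refine Fin.cases ?_ (fun i => ?_) i
  · rw [Rb_mulVec_zero]; simp [Qlift_zero]
  · rw [Rb_mulVec_succ]; simp [Qlift_succ]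

lemma Rb_neg_mulVec_Qlift (m : Fin d → ℝ) :
    (Rb (-m)).mulVec (Qlift m) = Fin.cons 1 0 := by
  have hσ : (∑ i, (-m) i ^ 2) = ∑ i, m i ^ 2 := sum_neg_sq m
  ext i
  refine Fin.cases ?_ (fun i => ?_) i
  · rw [Rb_mulVec_zero]
    simp only [Qlift_zero, Qlift_succ, hσ, Pi.neg_apply, neg_sq]
    have h2 : Real.sqrt (1 + ∑ i, m i ^ 2) * Real.sqrt (1 + ∑ i, m i ^ 2)
        = 1 + ∑ i, m i ^ 2 := Real.mul_self_sqrt (by positivity)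
    rw [h2]
    have h3 : (∑ k : Fin d, -m k * m k) = -∑ k, m k ^ 2 := by
      rw [← Finset.sum_neg_distrib]
      exact Finset.sum_congr rfl fun k _ => by ring
    rw [h3]
    simp
  · rw [Rb_mulVec_succ]
    simp only [Qlift_zero, Qlift_succ, sqrtIbb_neg, Pi.neg_apply, sum_sqrtIbb_b]
    simp [Fin.succ_ne_zero]
    ring
end pres

section pres2
variable {d : ℕ}

lemma mem_loid_RU {U : Matrix (Fin d) (Fin d) ℝ} (hU : Uᵀ * U = 1)
    {v : Fin (d+1) → ℝ} (hv : v ∈ Loid d) : (RU U).mulVec v ∈ Loid d := by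
  obtain ⟨h1, h2⟩ := hv
  exact ⟨by rw [lprod_mulVec (RU_lorentz hU)]; exact h1, by rw [RU_mulVec_zero]; exact h2⟩

lemma mem_loid_Rb (b : Fin d → ℝ) {v : Fin (d+1) → ℝ} (hv : v ∈ Loid d) :
    (Rb b).mulVec v ∈ Loid d := by
  obtain ⟨h1, h2⟩ := hv
  refine ⟨by rw [lprod_mulVec (Rb_lorentz b)]; exact h1, ?_⟩
  rw [Rb_mulVec_zero]
  rw [lprod_eq] at h1
  set p := ∑ i : Fin d, v i.succ ^ 2 with hp
  set S := ∑ k : Fin d, b k * v k.succ with hS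
  set σ := ∑ i, b i ^ 2 with hσ
  set β := Real.sqrt (1 + ∑ i, b i ^ 2) with hβ
  have hpn : 0 ≤ p := Finset.sum_nonneg fun i _ => sq_nonneg _
  have hσn : 0 ≤ σ := Finset.sum_nonneg fun i _ => sq_nonneg _
  have hβ2 : β ^ 2 = 1 + σ := Real.sq_sqrt (by positivity)
  have hβp : 0 < β := Real.sqrt_pos.2 (by positivity)
  have hv2 : v 0 ^ 2 = 1 + p := by
    have h : (∑ i : Fin d, v i.succ * v i.succ) = p := by
      rw [hp]; exact Finset.sum_congr rfl fun i _ => (sq (v i.succ)).symm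
    nlinarith [h1, h]
  have hcs : S ^ 2 ≤ σ * p := Finset.sum_mul_sq_le_sq_mul_sq _ _ _
  by_contra h
  push_neg at h
  have hle : β * v 0 ≤ -S := by linarith
  have h0 : 0 ≤ β * v 0 := le_of_lt (mul_pos hβp h2)
  have h1' : (β * v 0) ^ 2 ≤ (-S) ^ 2 := by
    have := pow_le_pow_left₀ h0 hle 2
    exact this
  have hb2 : (β * v 0) ^ 2 = (1 + σ) * (1 + p) := by rw [mul_pow, hβ2, hv2]
  nlinarith [h1', hb2, hcs, mul_nonneg hσn hpn]

lemma mulVec_sum' {N : ℕ} (A : Matrix (Fin (d+1)) (Fin (d+1)) ℝ)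
    (v : Fin N → Fin (d+1) → ℝ) : A.mulVec (∑ n, v n) = ∑ n, A.mulVec (v n) := by
  ext i
  simp only [Matrix.mulVec, dotProduct, Finset.sum_apply, Finset.mul_sum]
  rw [Finset.sum_comm]

end pres2

theorem stmt_16 (d N : ℕ) (hN : 0 < N)
    (x x' : Fin N → (Fin (d+1) → ℝ))
    (hx' : ∀ n, x' n ∈ Loid d)
    (b : Fin d → ℝ) (U : Matrix (Fin d) (Fin d) ℝ) (hU : Uᵀ * U = 1)
    (hrel : ∀ n, x n = (Rb b * RU U).mulVec (x' n)) :
    ∃ V : Matrix (Fin d) (Fin d) ℝ, Vᵀ * V = 1 ∧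
      ∀ n, (Rb (-(centroid x))).mulVec (x n) =
        (RU V * Rb (-(centroid x'))).mulVec (x' n) := by
  have hNe : Nonempty (Fin N) := ⟨⟨0, hN⟩⟩
  have hNpos : (0:ℝ) < N := by exact_mod_cast hN
  set A := Rb b * RU U with hA
  have hAL : IsLorentz A := (Rb_lorentz b).mul (RU_lorentz hU)
  have hxn : ∀ n, x n ∈ Loid d := fun n => by
    rw [hrel n, ← Matrix.mulVec_mulVec]
    exact mem_loid_Rb b (mem_loid_RU hU (hx' n))
  set xb := (N:ℝ)⁻¹ • ∑ n, x n with hxb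
  set xb' := (N:ℝ)⁻¹ • ∑ n, x' n with hxb'
  have hxbA : xb = A.mulVec xb' := by
    rw [hxb, hxb', Finset.sum_congr rfl (fun n _ => hrel n), ← mulVec_sum']
    exact (Matrix.mulVec_smul _ _ _).symm
  set q := lprod xb' xb' with hq
  have hqlprod : lprod xb xb = q := by rw [hxbA, lprod_mulVec hAL]
  have hsum : lprod (∑ n, x' n) (∑ n, x' n) ≤ (N:ℝ)^2 * (-1) := by
    rw [lprod_sum_left]
    rw [Finset.sum_congr rfl (fun m _ => lprod_sum_right (x' m) x')]
    calc (∑ m, ∑ n, lprod (x' m) (x' n)) ≤ ∑ _m : Fin N, ∑ _n : Fin N, (-1:ℝ) :=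
          Finset.sum_le_sum fun m _ => Finset.sum_le_sum fun n _ =>
            lprod_le_neg_one (hx' m) (hx' n)
      _ = (N:ℝ)^2 * (-1) := by
          simp only [Finset.sum_const, Finset.card_univ, Fintype.card_fin, nsmul_eq_mul]
          ring
  have hqle : q ≤ -1 := by
    rw [hq, hxb', lprod_smul_left, lprod_smul_right]
    calc (N:ℝ)⁻¹ * ((N:ℝ)⁻¹ * lprod (∑ n, x' n) (∑ n, x' n))
        ≤ (N:ℝ)⁻¹ * ((N:ℝ)⁻¹ * ((N:ℝ)^2 * (-1))) := by
          apply mul_le_mul_of_nonneg_left _ (by positivity)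
          exact mul_le_mul_of_nonneg_left hsum (by positivity)
      _ = -1 := by field_simp
  have hqneg : 0 < -q := by linarith
  set t := Real.sqrt (-q) with ht
  have ht2 : t^2 = -q := Real.sq_sqrt (le_of_lt hqneg)
  have htpos : 0 < t := Real.sqrt_pos.2 hqneg
  have ht0 : t ≠ 0 := ne_of_gt htpos
  set y := t⁻¹ • xb with hy
  set y' := t⁻¹ • xb' with hy'
  have hyA : y = A.mulVec y' := by
    rw [hy, hy', hxbA]; exact (Matrix.mulVec_smul _ _ _).symm
  have hmemy : ∀ (u : Fin N → Fin (d+1) → ℝ), (∀ n, u n ∈ Loid d) →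
      ((t⁻¹ • ((N:ℝ)⁻¹ • ∑ n, u n)) 0 > 0) := by
    intro u hu
    have : (0:ℝ) < ∑ n, u n 0 := Finset.sum_pos (fun n _ => (hu n).2) Finset.univ_nonempty
    have h0 : ((N:ℝ)⁻¹ • ∑ n, u n) 0 = (N:ℝ)⁻¹ * ∑ n, u n 0 := by
      simp [Finset.sum_apply]
    simp only [Pi.smul_apply, smul_eq_mul, h0]
    positivity
  have hy'L : y' ∈ Loid d := by
    constructor
    · rw [hy', lprod_smul_left, lprod_smul_right, ← hq]
      field_simp
      nlinarith [ht2]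
    · exact hmemy x' hx'
  have hyL : y ∈ Loid d := by
    constructor
    · rw [hy, lprod_smul_left, lprod_smul_right, hqlprod]
      field_simp
      nlinarith [ht2]
    · exact hmemy x hxn
  -- centroid identities
  have hcen : ∀ (u : Fin N → Fin (d+1) → ℝ), lprod ((N:ℝ)⁻¹ • ∑ n, u n) ((N:ℝ)⁻¹ • ∑ n, u n) = q →
      centroid u = Pproj (t⁻¹ • ((N:ℝ)⁻¹ • ∑ n, u n)) := by
    intro u hlu
    funext i
    simp only [centroid, hlu, Pproj, Pi.smul_apply, smul_eq_mul, Finset.sum_apply, ← ht,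
      one_div]
  have hQ : ∀ (z : Fin (d+1) → ℝ), z ∈ Loid d → Qlift (Pproj z) = z := by
    intro z hz
    obtain ⟨h1, h2⟩ := hz
    rw [lprod_eq] at h1
    funext i
    refine Fin.cases ?_ (fun i => ?_) i
    · rw [Qlift_zero]
      have hsq : 1 + ∑ i, Pproj z i ^ 2 = z 0 ^ 2 := by
        simp only [Pproj]
        have h : (∑ i : Fin d, z i.succ * z i.succ) = ∑ i : Fin d, z i.succ ^ 2 :=
          Finset.sum_congr rfl fun i _ => (sq (z i.succ)).symm
        nlinarith [h1, h]
      rw [hsq, Real.sqrt_sq (le_of_lt h2)]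
    · rw [Qlift_succ]; rfl
  have hcx : Qlift (centroid x) = y := by
    rw [hcen x hqlprod, ← hxb, ← hy]; exact hQ y hyL
  have hcx' : Qlift (centroid x') = y' := by
    rw [hcen x' hq.symm, ← hxb', ← hy']; exact hQ y' hy'L
  -- construct V
  set m := centroid x with hm
  set m' := centroid x' with hm'
  set S := Rb (-m) * A * Rb m' with hSdef
  have hSL : IsLorentz S := ((Rb_lorentz _).mul hAL).mul (Rb_lorentz _)
  have hScol : S.mulVec (Fin.cons 1 0) = Fin.cons 1 0 := by
    rw [hSdef, ← Matrix.mulVec_mulVec, ← Matrix.mulVec_mulVec, Rb_mulVec_e0, hcx', ← hyA,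
      ← hcx, Rb_neg_mulVec_Qlift]
  have hcol0 : ∀ i, S i 0 = if i = 0 then (1:ℝ) else 0 := by
    intro i
    have h := congrFun hScol i
    rw [mulVec_succ] at h
    simp only [Fin.cons_succ, Pi.zero_apply, mul_zero, Finset.sum_const_zero, add_zero,
      Fin.cons_zero, mul_one] at h
    rw [h]
    refine Fin.cases ?_ (fun i => ?_) i <;> simp [Fin.succ_ne_zero]
  have hrow0 : ∀ j : Fin d, S 0 j.succ = 0 := by
    intro j
    have h := congrFun (congrFun hSL 0) j.succ
    rw [mul_Hm_mul_apply] at h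
    simp only [Matrix.transpose_apply] at h
    rw [hcol0 0] at h
    have hz : ∀ k : Fin d, S k.succ 0 = 0 := fun k => by
      rw [hcol0 k.succ]; simp [Fin.succ_ne_zero]
    simp only [hz, zero_mul, Finset.sum_const_zero, add_zero] at h
    have hh : Hm d 0 j.succ = 0 := by
      simp [Hm, Matrix.diagonal_apply, (Fin.succ_ne_zero j).symm]
    rw [hh] at h
    simpa using h
  set V : Matrix (Fin d) (Fin d) ℝ := Matrix.of (fun i j => S i.succ j.succ) with hV
  have hSRU : S = RU V := by
    ext i j
    refine Fin.cases ?_ (fun i => ?_) i <;> refine Fin.cases ?_ (fun j => ?_) j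
    · rw [hcol0 0]; simp
    · rw [hrow0 j]; simp
    · rw [hcol0 i.succ]; simp [Fin.succ_ne_zero]
    · simp [hV]
  have hVU : Vᵀ * V = 1 := by
    ext i j
    have h := congrFun (congrFun hSL i.succ) j.succ
    rw [mul_Hm_mul_apply] at h
    simp only [Matrix.transpose_apply] at h
    rw [hrow0 i] at h
    have hH : Hm d i.succ j.succ = if i = j then (1:ℝ) else 0 := by
      simp [Hm, Matrix.diagonal_apply, Fin.succ_inj, Fin.succ_ne_zero]
    rw [hH] at h
    simp only [zero_mul, mul_zero, neg_zero, zero_add] at h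
    rw [Matrix.mul_apply]
    simp only [Matrix.transpose_apply, hV, Matrix.of_apply, Matrix.one_apply]
    rw [h]
  refine ⟨V, hVU, fun n => ?_⟩
  have hkey : S * Rb (-m') = Rb (-m) * A := by
    rw [hSdef, Matrix.mul_assoc (Rb (-m) * A), Rb_mul_Rb_neg, mul_one]
  rw [hrel n, Matrix.mulVec_mulVec, ← hkey, hSRU]
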